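/- arXiv:1708.05213 — 2 statements merged into one kernel-verified Lean document; each statement's English description precedes it below -/
import Mathlib

section
/- If φ is a valuation on the family of convex polyhedral cones in ℝⁿ, then the function φ°(C) := φ(C°) is also a valuation on convex polyhedral cones. -/
/-!
Dualising turns `C ∪ D` into `C° ∩ D°`, and, when `C ∪ D` is convex and `C`, `D` are closed,
turns `C ∩ D` into `C° ∪ D°`. So the valuation identity of `C ↦ φ(C°)` at `C, D` is that of `φ`
at `C°, D°`, provided duals of polyhedral cones are polyhedral. That is the Minkowski–Weyl
theorem: the dual of `{x | ⟪u, x⟫ ≤ 0 for u ∈ s}` is the conic hull of `s`, and adding one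
generator to a cone cut out by finitely many halfspaces keeps it of that form by Fourier–Motzkin
elimination.
-/

open scoped RealInnerProductSpace
open MeasureTheory

attribute [local instance] Classical.propDecidable

noncomputable section

abbrev E (n : ℕ) : Type := EuclideanSpace ℝ (Fin n)

/-- The dual cone `C° = {x : ⟪x,y⟫ ≤ 0 for all y ∈ C}`. -/
def polarDual {n : ℕ} (C : Set (E n)) : Set (E n) := {x | ∀ y ∈ C, ⟪x, y⟫ ≤ 0}

/-- A convex polyhedral cone: a finite intersection of closed halfspaces whose
boundaries contain the origin (empty intersection = ℝⁿ). -/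
def IsPolyhedralCone {n : ℕ} (C : Set (E n)) : Prop :=
  ∃ s : Finset (E n), C = {x | ∀ u ∈ s, ⟪u, x⟫ ≤ 0}

/-- A (nonempty) compact convex polytope: the convex hull of a nonempty finite set. -/
def IsPolytope {n : ℕ} (P : Set (E n)) : Prop :=
  ∃ s : Finset (E n), s.Nonempty ∧ P = convexHull ℝ (s : Set (E n))

/-- A polyhedron: a finite union of compact convex polytopes (possibly empty). -/
def IsPolyhedron {n : ℕ} (P : Set (E n)) : Prop :=
  ∃ F : Finset (Set (E n)), (∀ A ∈ F, IsPolytope A) ∧ P = ⋃₀ F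

/-- The tangent cone `Tan(P,x) = {v : [x, x+λv] ⊆ P for some λ > 0}`. -/
def Tan {n : ℕ} (P : Set (E n)) (x : E n) : Set (E n) :=
  {v | ∃ l : ℝ, 0 < l ∧ segment ℝ x (x + l • v) ⊆ P}

/-- The (linear) dimension of a cone, i.e. the dimension of its linear span. -/
def coneDim {n : ℕ} (C : Set (E n)) : ℕ := Module.finrank ℝ (Submodule.span ℝ C)

/-- A valuation on the family of convex polyhedral cones. -/
def IsConeValuation {n : ℕ} (φ : Set (E n) → ℝ) : Prop :=
  ∀ C D : Set (E n), IsPolyhedralCone C → IsPolyhedralCone D → IsPolyhedralCone (C ∪ D) →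
    φ (C ∪ D) + φ (C ∩ D) = φ C + φ D

/-- A simple valuation vanishes on cones of dimension `< n`. -/
def IsSimple {n : ℕ} (φ : Set (E n) → ℝ) : Prop :=
  ∀ C : Set (E n), IsPolyhedralCone C → coneDim C < n → φ C = 0

/-- A finite union of convex polyhedral cones (possibly empty). -/
def IsConeUnion {n : ℕ} (S : Set (E n)) : Prop :=
  ∃ F : Finset (Set (E n)), (∀ A ∈ F, IsPolyhedralCone A) ∧ S = ⋃₀ F

/-- A relatively open polyhedral cone: the relative interior of a convex polyhedral cone. -/
def IsROCone {n : ℕ} (A : Set (E n)) : Prop :=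
  ∃ C : Set (E n), IsPolyhedralCone C ∧ A = intrinsicInterior ℝ C

/-- A finite union of relatively open polyhedral cones (possibly empty). -/
def IsROConeUnion {n : ℕ} (S : Set (E n)) : Prop :=
  ∃ F : Finset (Set (E n)), (∀ A ∈ F, IsROCone A) ∧ S = ⋃₀ F

/-- The normal cone `N(P,x) = {u : ⟪u, y - x⟫ ≤ 0 for all y ∈ P}`. -/
def normalCone {n : ℕ} (P : Set (E n)) (x : E n) : Set (E n) :=
  {u | ∀ y ∈ P, ⟪u, y - x⟫ ≤ 0}

/-- The outer angle `Γ(C) = σ(C° ∩ S^{n-1})`, expressed via the normalized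
solid-angle (cone-volume) measure, which agrees with the normalized spherical
Lebesgue measure of `C° ∩ S^{n-1}` for cones `C°`. -/
def outerAngle {n : ℕ} (C : Set (E n)) : ℝ :=
  (volume (polarDual C ∩ Metric.closedBall (0 : E n) 1)).toReal /
    (volume (Metric.closedBall (0 : E n) 1)).toReal

theorem exists_nonneg_forall_le_mul_iff {ι : Type*} (s : Finset ι) (a b : ι → ℝ) :
    (∃ l : ℝ, 0 ≤ l ∧ ∀ i ∈ s, a i ≤ l * b i) ↔
      (∀ i ∈ s, b i ≤ 0 → a i ≤ 0) ∧
        ∀ i ∈ s, 0 < b i → ∀ j ∈ s, b j < 0 → b i * a j ≤ b j * a i := by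
  constructor
  · rintro ⟨l, hl, h⟩
    refine ⟨fun i hi hbi => (h i hi).trans (mul_nonpos_of_nonneg_of_nonpos hl hbi),
      fun i hi hbi j hj hbj => ?_⟩
    nlinarith [h i hi, h j hj]
  · rintro ⟨hnonpos, hpair⟩
    -- `l` is the largest of the lower bounds `a i / b i` (for `b i > 0`) and `0`.
    set lower := insert 0 ((s.filter fun i => 0 < b i).image fun i => a i / b i)
    have hne : lower.Nonempty := Finset.insert_nonempty _ _
    refine ⟨lower.max' hne, lower.le_max' 0 (Finset.mem_insert_self _ _), fun j hj => ?_⟩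
    rcases lt_trichotomy (b j) 0 with hbj | hbj | hbj
    · suffices lower.max' hne ≤ a j / b j by rwa [le_div_iff_of_neg hbj] at this
      refine lower.max'_le hne _ fun c hc => ?_
      simp only [lower, Finset.mem_insert, Finset.mem_image, Finset.mem_filter] at hc
      rcases hc with rfl | ⟨i, ⟨hi, hbi⟩, rfl⟩
      · exact div_nonneg_of_nonpos (hnonpos j hj hbj.le) hbj.le
      · have hq : a j = a j / b j * b j := (div_mul_cancel₀ _ hbj.ne).symm
        have := hpair i hi hbi j hj hbj
        rw [div_le_iff₀ hbi]
        nlinarith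
    · simpa [hbj] using hnonpos j hj hbj.le
    · have : a j / b j ≤ lower.max' hne := lower.le_max' _ (by
        simp only [lower, Finset.mem_insert, Finset.mem_image, Finset.mem_filter]
        exact Or.inr ⟨j, ⟨hj, hbj⟩, rfl⟩)
      rwa [div_le_iff₀ hbj] at this

theorem PointedCone.mem_hull_insert_iff {V : Type*} [AddCommGroup V] [Module ℝ V] {a x : V}
    {s : Set V} : x ∈ PointedCone.hull ℝ (insert a s) ↔
      ∃ l : ℝ, 0 ≤ l ∧ x - l • a ∈ PointedCone.hull ℝ s := by
  rw [PointedCone.hull, Submodule.span_insert, Submodule.mem_sup]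
  constructor
  · rintro ⟨_, hy, z, hz, rfl⟩
    obtain ⟨c, rfl⟩ := Submodule.mem_span_singleton.mp hy
    exact ⟨c, c.2, by simpa [← Nonneg.coe_smul] using hz⟩
  · rintro ⟨l, hl, hx⟩
    exact ⟨l • a, Submodule.mem_span_singleton.mpr ⟨⟨l, hl⟩, rfl⟩, _, hx, by abel⟩

section PolyhedralCone

variable {n : ℕ}

theorem polarDual_union (C D : Set (E n)) :
    polarDual (C ∪ D) = polarDual C ∩ polarDual D := by
  ext x
  simp [polarDual, or_imp, forall_and]

theorem polarDual_polarDual_polarDual (C : Set (E n)) :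
    polarDual (polarDual (polarDual C)) = polarDual C := by
  refine Set.Subset.antisymm (fun x hx y hy => hx y fun z hz => ?_) fun x hx y hy => ?_
  · rw [real_inner_comm]; exact hz y hy
  · rw [real_inner_comm]; exact hy x hx

theorem polarDual_hull (C : Set (E n)) :
    polarDual (PointedCone.hull ℝ C : Set (E n)) = polarDual C := by
  refine Set.Subset.antisymm (fun x hx y hy => hx y (PointedCone.subset_hull hy))
    fun x hx y hy => ?_
  induction hy using Submodule.span_induction with
  | mem z hz => exact hx z hz
  | zero => simp
  | add z w _ _ hz hw => rw [inner_add_right]; linarith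
  | smul c z _ hz =>
    rw [← Nonneg.coe_smul, real_inner_smul_right]
    exact mul_nonpos_of_nonneg_of_nonpos c.2 hz

theorem isClosed_polarDual (C : Set (E n)) : IsClosed (polarDual C) := by
  have : polarDual C = ⋂ y ∈ C, {x | ⟪x, y⟫ ≤ 0} := by ext; simp [polarDual]
  rw [this]
  exact isClosed_biInter fun y _ => isClosed_le (continuous_id.inner continuous_const)
    continuous_const

theorem convex_polarDual (C : Set (E n)) : Convex ℝ (polarDual C) := by
  intro x hx y hy a b ha hb _ z hz
  rw [inner_add_left, real_inner_smul_left, real_inner_smul_left]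
  nlinarith [hx z hz, hy z hz]

theorem polarDual_inter_of_convex_union {C D : Set (E n)} (hC : IsClosed C) (hD : IsClosed D)
    (hCD : Convex ℝ (C ∪ D)) : polarDual (C ∩ D) = polarDual C ∪ polarDual D := by
  refine Set.Subset.antisymm (fun y hy => ?_) (Set.union_subset
    (fun y hy x hx => hy x hx.1) fun y hy x hx => hy x hx.2)
  by_contra hmem
  simp only [Set.mem_union, polarDual, Set.mem_ofPred_eq, not_or, not_forall, not_le] at hmem
  obtain ⟨⟨a, haC, hya⟩, ⟨b, hbD, hyb⟩⟩ := hmem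
  -- The segment `[a, b] ⊆ C ∪ D` is connected, so it meets `C ∩ D`, where `y` is not positive.
  obtain ⟨c, hc, hcC, hcD⟩ := isPreconnected_closed_iff.mp (convex_segment a b).isPreconnected
    C D hC hD (hCD.segment_subset (Or.inl haC) (Or.inr hbD))
    ⟨a, left_mem_segment ℝ a b, haC⟩ ⟨b, right_mem_segment ℝ a b, hbD⟩
  have hpos : 0 < ⟪y, c⟫ :=
    (convex_halfSpace_gt (innerₛₗ ℝ y).isLinear 0).segment_subset hya hyb hc
  exact absurd (hy c ⟨hcC, hcD⟩) hpos.not_ge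

theorem isPolyhedralCone_iff {C : Set (E n)} :
    IsPolyhedralCone C ↔ ∃ s : Finset (E n), C = polarDual s := by
  have (s : Finset (E n)) : {x | ∀ u ∈ s, ⟪u, x⟫ ≤ 0} = polarDual (s : Set (E n)) := by
    ext; simp [polarDual, real_inner_comm]
  simp only [IsPolyhedralCone, this]

theorem IsPolyhedralCone.isClosed {C : Set (E n)} (hC : IsPolyhedralCone C) : IsClosed C := by
  obtain ⟨s, rfl⟩ := isPolyhedralCone_iff.mp hC
  exact isClosed_polarDual _

theorem IsPolyhedralCone.convex {C : Set (E n)} (hC : IsPolyhedralCone C) : Convex ℝ C := by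
  obtain ⟨s, rfl⟩ := isPolyhedralCone_iff.mp hC
  exact convex_polarDual _

theorem IsPolyhedralCone.inter {C D : Set (E n)} (hC : IsPolyhedralCone C)
    (hD : IsPolyhedralCone D) : IsPolyhedralCone (C ∩ D) := by
  obtain ⟨s, rfl⟩ := isPolyhedralCone_iff.mp hC
  obtain ⟨t, rfl⟩ := isPolyhedralCone_iff.mp hD
  exact isPolyhedralCone_iff.mpr ⟨s ∪ t, by rw [Finset.coe_union, polarDual_union]⟩

theorem isPolyhedralCone_singleton_zero : IsPolyhedralCone ({0} : Set (E n)) := by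
  refine ⟨Finset.univ.image (fun i => EuclideanSpace.single i 1) ∪
    Finset.univ.image (fun i => -EuclideanSpace.single i 1), ?_⟩
  ext x
  simp only [Set.mem_singleton_iff, Set.mem_ofPred_eq, Finset.mem_union, Finset.mem_image,
    Finset.mem_univ, true_and, or_imp, forall_and, forall_exists_index, forall_apply_eq_imp_iff,
    inner_neg_left, EuclideanSpace.inner_single_left, map_one, one_mul, neg_nonpos]
  constructor
  · rintro rfl; simp
  · rintro ⟨h₁, h₂⟩
    ext i
    exact le_antisymm (h₁ i) (h₂ i)

/-- The inequalities of `C + ℝ≥0 • v` come from Fourier–Motzkin elimination of the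
coefficient of `v`. -/
theorem IsPolyhedralCone.add_ray {C : Set (E n)} (hC : IsPolyhedralCone C)
    (v : E n) : IsPolyhedralCone {x | ∃ l : ℝ, 0 ≤ l ∧ x - l • v ∈ C} := by
  obtain ⟨t, rfl⟩ := hC
  refine ⟨t.filter (fun u => ⟪u, v⟫ ≤ 0) ∪
    Finset.image₂ (fun p w => ⟪p, v⟫ • w - ⟪w, v⟫ • p)
      (t.filter fun u => 0 < ⟪u, v⟫) (t.filter fun u => ⟪u, v⟫ < 0), ?_⟩
  ext x
  have := exists_nonneg_forall_le_mul_iff t (fun u => ⟪u, x⟫) (fun u => ⟪u, v⟫)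
  simp only [Set.mem_ofPred_eq, inner_sub_right, inner_sub_left, real_inner_smul_right,
    real_inner_smul_left, sub_nonpos, Finset.mem_union, or_imp, forall_and,
    Finset.forall_mem_image₂, Finset.mem_filter, and_imp] at this ⊢
  exact this

theorem isPolyhedralCone_hull (s : Finset (E n)) :
    IsPolyhedralCone (PointedCone.hull ℝ (s : Set (E n)) : Set (E n)) := by
  induction s using Finset.induction_on with
  | empty => simpa using isPolyhedralCone_singleton_zero
  | insert a s _ ih =>
    convert ih.add_ray a using 1
    ext x
    simp only [Finset.coe_insert, SetLike.mem_coe, PointedCone.mem_hull_insert_iff,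
      Set.mem_ofPred_eq]

theorem IsPolyhedralCone.polarDual {C : Set (E n)} (hC : IsPolyhedralCone C) :
    IsPolyhedralCone (polarDual C) := by
  obtain ⟨s, rfl⟩ := isPolyhedralCone_iff.mp hC
  obtain ⟨t, ht⟩ := isPolyhedralCone_iff.mp (isPolyhedralCone_hull s)
  refine isPolyhedralCone_iff.mpr ⟨t, ?_⟩
  rw [← polarDual_hull (s : Set (E n)), ht, polarDual_polarDual_polarDual]

end PolyhedralCone

/-- If `φ` is a valuation on convex polyhedral cones, then so is `C ↦ φ(C°)`. -/
theorem stmt2 {n : ℕ} (φ : Set (E n) → ℝ) (hφ : IsConeValuation φ) :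
    IsConeValuation (fun C => φ (polarDual C)) := by
  intro C D hC hD hCD
  dsimp only
  have hinter : polarDual (C ∩ D) = polarDual C ∪ polarDual D :=
    polarDual_inter_of_convex_union hC.isClosed hD.isClosed hCD.convex
  have hdual := hφ _ _ hC.polarDual hD.polarDual (hinter ▸ (hC.inter hD).polarDual)
  rw [polarDual_union, hinter]
  linarith [hdual]
end
end

section
/- Let φ be a simple, normalized valuation on convex polyhedral cones in ℝⁿ, and let φ° be the additive extension to finite unions of polyhedral cones of its dual valuation C ↦ φ(C°). Define κ(P,x) = φ°(Tan(P,x)) for x ∈ P and κ(P,x) = 0 otherwise. Then for each fixed x, the function P ↦ κ(P,x) is weakly additive on convex polytopes, and hence a valuation on polyhedra. -/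
open scoped RealInnerProductSpace
open MeasureTheory

attribute [local instance] Classical.propDecidable

noncomputable section

/-!
Since `φd ∅ = 0`, `κ(P, x) = φd (Tan P x)` for every `P`. Tangent cones commute with
intersections, and with finite unions of closed convex sets. The tangent cone of a polytope at one
of its points is finitely generated, hence by the conic Carathéodory theorem a finite union of
simplicial cones, which are polyhedral. Cutting a polytope by a hyperplane into two closed convex
pieces, or taking the union of two polyhedra, therefore turns into a union of finite unions of
polyhedral cones, on which `φd` is additive.
-/

section ConicHull

def conicHull (𝕜 : Type*) {ι V : Type*} [Semiring 𝕜] [PartialOrder 𝕜] [AddCommMonoid V]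
    [Module 𝕜 V] (t : Finset ι) (g : ι → V) : Set V :=
  {v | ∃ f : ι → 𝕜, (∀ i ∈ t, 0 ≤ f i) ∧ ∑ i ∈ t, f i • g i = v}

variable {𝕜 ι V : Type*}

theorem conicHull_mono [Semiring 𝕜] [PartialOrder 𝕜] [AddCommMonoid V] [Module 𝕜 V]
    {s t : Finset ι} {g : ι → V} (h : s ⊆ t) : conicHull 𝕜 s g ⊆ conicHull 𝕜 t g := by
  rintro v ⟨f, hf, rfl⟩
  refine ⟨fun i => if i ∈ s then f i else 0, fun i _ => ?_, ?_⟩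
  · dsimp only
    split_ifs with hi
    exacts [hf i hi, le_rfl]
  · simp only [ite_smul, zero_smul, Finset.sum_ite_mem, Finset.inter_eq_right.2 h]

variable [Field 𝕜] [LinearOrder 𝕜] [IsStrictOrderedRing 𝕜] [AddCommGroup V] [Module 𝕜 V]
  {t : Finset ι} {g : ι → V} {v : V}

/-- One step of the conic Carathéodory theorem: subtracting a suitable multiple of a linear
relation among the generators kills one coefficient while keeping all of them nonnegative. -/
theorem exists_mem_conicHull_erase (hli : ¬LinearIndepOn 𝕜 g (t : Set ι))
    (hv : v ∈ conicHull 𝕜 t g) : ∃ j ∈ t, v ∈ conicHull 𝕜 (t.erase j) g := by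
  classical
  obtain ⟨f, hf, rfl⟩ := hv
  obtain ⟨G, hG, hpos⟩ : ∃ G : ι → 𝕜, ∑ i ∈ t, G i • g i = 0 ∧ ∃ i ∈ t, 0 < G i := by
    obtain ⟨G, hG, i, hi, hGi⟩ := not_linearIndepOn_finset_iff.1 hli
    rcases hGi.lt_or_gt with hneg | hpos
    · exact ⟨-G, by simp [neg_smul, hG], i, hi, neg_pos.2 hneg⟩
    · exact ⟨G, hG, i, hi, hpos⟩
  obtain ⟨j, hj, hmin⟩ := (t.filter (0 < G ·)).exists_min_image (fun i => f i / G i)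
    (by simpa [Finset.Nonempty] using hpos)
  rw [Finset.mem_filter] at hj
  set r := f j / G j
  have hr : 0 ≤ r := div_nonneg (hf j hj.1) hj.2.le
  refine ⟨j, hj.1, fun i => f i - r * G i, fun i hi => sub_nonneg.2 ?_, ?_⟩
  · replace hi := Finset.mem_of_mem_erase hi
    rcases lt_or_ge 0 (G i) with hGi | hGi
    · exact (le_div_iff₀ hGi).1 (hmin i (Finset.mem_filter.2 ⟨hi, hGi⟩))
    · exact (mul_nonpos_of_nonneg_of_nonpos hr hGi).trans (hf i hi)
  · rw [Finset.sum_erase _ (by simp [r, div_mul_cancel₀ _ hj.2.ne'])]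
    simp only [sub_smul, mul_smul, Finset.sum_sub_distrib, ← Finset.smul_sum, hG, smul_zero,
      sub_zero]

theorem exists_linearIndepOn_mem_conicHull (hv : v ∈ conicHull 𝕜 t g) :
    ∃ I ⊆ t, LinearIndepOn 𝕜 g (I : Set ι) ∧ v ∈ conicHull 𝕜 I g := by
  classical
  induction t using Finset.strongInduction with
  | H t ih =>
    by_cases hli : LinearIndepOn 𝕜 g (t : Set ι)
    · exact ⟨t, subset_rfl, hli, hv⟩
    obtain ⟨j, hj, hvj⟩ := exists_mem_conicHull_erase hli hv
    obtain ⟨I, hI, hIli, hvI⟩ := ih _ (Finset.erase_ssubset hj) hvj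
    exact ⟨I, hI.trans (Finset.erase_subset _ _), hIli, hvI⟩

end ConicHull

section PolyhedralCones

variable {n : ℕ}

theorem isPolyhedralCone_setOf_forall_le {ι : Type*} [Fintype ι] (f : ι → E n →ₗ[ℝ] ℝ) :
    IsPolyhedralCone {x | ∀ i, f i x ≤ 0} := by
  let u : ι → E n := fun i =>
    (InnerProductSpace.toDual ℝ (E n)).symm (LinearMap.toContinuousLinearMap (f i))
  have hu : ∀ i x, ⟪u i, x⟫ = f i x := fun i x => by simp [u]
  refine ⟨Finset.univ.image u, ?_⟩
  ext x
  simp [hu]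

/-- A cone on linearly independent generators `g i` is cut out by the inequalities `0 ≤ R x i`
and the equations `x = L (R x)`, where `L` is the linear combination map and `R` a left inverse. -/
theorem isPolyhedralCone_conicHull {ι : Type*} {I : Finset ι} {g : ι → E n}
    (hli : LinearIndepOn ℝ g (I : Set ι)) : IsPolyhedralCone (conicHull ℝ I g) := by
  set L := Fintype.linearCombination ℝ (fun i : I => g i)
  have hL : LinearMap.ker L = ⊥ :=
    LinearMap.ker_eq_bot.2 (linearIndependent_iff_injective_fintypeLinearCombination.1 hli)
  obtain ⟨R, hRL⟩ := L.exists_leftInverse_of_injective hL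
  set b := Module.finBasis ℝ (E n)
  set D : E n →ₗ[ℝ] E n := LinearMap.id - L ∘ₗ R
  let f : I ⊕ (Fin (Module.finrank ℝ (E n)) ⊕ Fin (Module.finrank ℝ (E n))) → E n →ₗ[ℝ] ℝ
    | .inl i => -(LinearMap.proj i ∘ₗ R)
    | .inr (.inl j) => b.coord j ∘ₗ D
    | .inr (.inr j) => -(b.coord j ∘ₗ D)
  convert isPolyhedralCone_setOf_forall_le f using 1
  ext x
  have hLR : ∀ c, R (L c) = c := fun c => congrArg (· c) hRL
  have hmem : x ∈ conicHull ℝ I g ↔ (∀ i, 0 ≤ R x i) ∧ D x = 0 := by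
    simp only [D, LinearMap.sub_apply, LinearMap.id_apply, LinearMap.comp_apply, sub_eq_zero]
    constructor
    · rintro ⟨c, hc, rfl⟩
      have hx : ∑ i ∈ I, c i • g i = L (fun i => c i) := by
        simpa [L, Fintype.linearCombination_apply] using (I.sum_attach fun i => c i • g i).symm
      rw [hx, hLR]
      exact ⟨fun i => hc i i.2, rfl⟩
    · rintro ⟨hc, hx⟩
      refine ⟨fun i => if h : i ∈ I then R x ⟨i, h⟩ else 0, fun i hi => by simp [hi, hc], ?_⟩
      conv_rhs => rw [hx]
      rw [← Finset.sum_coe_sort I]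
      simp [L, Fintype.linearCombination_apply]
  simp only [hmem, Set.mem_ofPred_eq, Sum.forall, f, LinearMap.neg_apply, LinearMap.comp_apply,
    neg_nonpos, LinearMap.proj_apply]
  refine and_congr_right fun _ => ?_
  rw [← b.forall_coord_eq_zero_iff, ← forall_and]
  exact forall_congr' fun _ => le_antisymm_iff

theorem IsPolyhedralCone.isConeUnion {C : Set (E n)} (hC : IsPolyhedralCone C) :
    IsConeUnion C :=
  ⟨{C}, by simpa using hC, by simp⟩

theorem isConeUnion_empty : IsConeUnion (∅ : Set (E n)) :=
  ⟨∅, by simp, by simp⟩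

theorem IsConeUnion.union {S T : Set (E n)} (hS : IsConeUnion S) (hT : IsConeUnion T) :
    IsConeUnion (S ∪ T) := by
  obtain ⟨F, hF, rfl⟩ := hS
  obtain ⟨G, hG, rfl⟩ := hT
  refine ⟨F ∪ G, fun A hA => ?_, by rw [Finset.coe_union, Set.sUnion_union]⟩
  rcases Finset.mem_union.1 hA with hA | hA
  exacts [hF A hA, hG A hA]

theorem IsConeUnion.inter {S T : Set (E n)} (hS : IsConeUnion S) (hT : IsConeUnion T) :
    IsConeUnion (S ∩ T) := by
  obtain ⟨F, hF, rfl⟩ := hS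
  obtain ⟨G, hG, rfl⟩ := hT
  refine ⟨(F ×ˢ G).image fun p => p.1 ∩ p.2, ?_, ?_⟩
  · simp only [Finset.mem_image, Finset.mem_product, Prod.exists, forall_exists_index, and_imp]
    rintro _ C D hC hD rfl
    exact (hF C hC).inter (hG D hD)
  · rw [Set.sUnion_inter_sUnion, Finset.coe_image, Set.sUnion_image, Finset.coe_product]

theorem IsConeUnion.biUnion {ι : Type*} {t : Finset ι} {S : ι → Set (E n)}
    (hS : ∀ i ∈ t, IsConeUnion (S i)) : IsConeUnion (⋃ i ∈ t, S i) := by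
  classical
  induction t using Finset.induction_on with
  | empty => simpa using isConeUnion_empty
  | insert i t _ ih =>
    rw [Finset.set_biUnion_insert]
    exact (hS i (t.mem_insert_self i)).union (ih fun j hj => hS j (Finset.mem_insert_of_mem hj))

theorem isConeUnion_conicHull {ι : Type*} (t : Finset ι) (g : ι → E n) :
    IsConeUnion (conicHull ℝ t g) := by
  classical
  refine ⟨(t.powerset.filter fun I : Finset ι => LinearIndepOn ℝ g (I : Set ι)).image
    (conicHull ℝ · g), ?_, ?_⟩
  · simp only [Finset.mem_image, Finset.mem_filter, forall_exists_index, and_imp]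
    rintro _ I - hI rfl
    exact isPolyhedralCone_conicHull hI
  · ext v
    simp only [Finset.coe_image, Set.sUnion_image, Set.mem_iUnion, Finset.mem_coe,
      Finset.mem_filter, Finset.mem_powerset, exists_prop]
    constructor
    · intro hv
      obtain ⟨I, hIt, hI, hvI⟩ := exists_linearIndepOn_mem_conicHull hv
      exact ⟨I, ⟨hIt, hI⟩, hvI⟩
    · rintro ⟨I, ⟨hIt, -⟩, hvI⟩
      exact conicHull_mono hIt hvI

end PolyhedralCones

section TangentCones

open Filter Topology

variable {n : ℕ} {P A B : Set (E n)} {x v : E n}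

theorem segment_add_smul_subset {l l' : ℝ} (hl : 0 ≤ l) (hll' : l ≤ l') :
    segment ℝ x (x + l • v) ⊆ segment ℝ x (x + l' • v) := by
  refine (convex_segment _ _).segment_subset (left_mem_segment ℝ _ _) ?_
  rcases hl.eq_or_lt with rfl | hl
  · simpa using left_mem_segment ℝ x (x + l' • v)
  have hl' : 0 < l' := hl.trans_le hll'
  refine ⟨1 - l / l', l / l', sub_nonneg.2 ((div_le_one hl').2 hll'), (div_pos hl hl').le,
    by ring, ?_⟩
  rw [smul_add, smul_smul, div_mul_cancel₀ _ hl'.ne']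
  module

theorem tan_mono (h : A ⊆ B) (x : E n) : Tan A x ⊆ Tan B x :=
  fun _ ⟨l, hl, hs⟩ => ⟨l, hl, hs.trans h⟩

theorem mem_of_mem_tan (hv : v ∈ Tan P x) : x ∈ P := by
  obtain ⟨l, -, hs⟩ := hv
  exact hs (left_mem_segment ℝ _ _)

theorem tan_eq_empty_of_notMem (hx : x ∉ P) : Tan P x = ∅ :=
  Set.eq_empty_of_forall_notMem fun _ hv => hx (mem_of_mem_tan hv)

theorem mem_tan_iff_of_convex (hP : Convex ℝ P) (hx : x ∈ P) :
    v ∈ Tan P x ↔ ∃ l : ℝ, 0 < l ∧ x + l • v ∈ P :=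
  ⟨fun ⟨l, hl, hs⟩ => ⟨l, hl, hs (right_mem_segment ℝ _ _)⟩,
    fun ⟨l, hl, hxv⟩ => ⟨l, hl, hP.segment_subset hx hxv⟩⟩

theorem tan_inter (A B : Set (E n)) (x : E n) : Tan (A ∩ B) x = Tan A x ∩ Tan B x := by
  refine subset_antisymm (Set.subset_inter (tan_mono Set.inter_subset_left x)
    (tan_mono Set.inter_subset_right x)) ?_
  rintro v ⟨⟨l, hl, hA⟩, ⟨l', hl', hB⟩⟩
  exact ⟨min l l', lt_min hl hl', Set.subset_inter
    ((segment_add_smul_subset (lt_min hl hl').le (min_le_left _ _)).trans hA)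
    ((segment_add_smul_subset (lt_min hl hl').le (min_le_right _ _)).trans hB)⟩

theorem eventually_add_smul_mem {U : Set (E n)} (hU : U ∈ 𝓝 x) (v : E n) :
    ∀ᶠ t in 𝓝[>] (0 : ℝ), x + t • v ∈ U := by
  have : Tendsto (fun t : ℝ => x + t • v) (𝓝 0) (𝓝 x) := by
    simpa using (Continuous.tendsto (f := fun t : ℝ => x + t • v) (by fun_prop) 0)
  exact (this.mono_left nhdsWithin_le_nhds).eventually hU

theorem tan_eq_univ_of_mem_nhds (hP : P ∈ 𝓝 x) : Tan P x = Set.univ := by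
  refine Set.eq_univ_of_forall fun v => ?_
  obtain ⟨ε, hε, hball⟩ := Metric.mem_nhds_iff.1 hP
  obtain ⟨t, ht, ht0⟩ :=
    ((eventually_add_smul_mem (Metric.ball_mem_nhds x hε) v).and self_mem_nhdsWithin).exists
  exact ⟨t, ht0, ((convex_ball x ε).segment_subset (Metric.mem_ball_self hε) ht).trans hball⟩

/-- Near `x`, the members of `F` that miss `x` stay away from `x` because they are closed, so a
short initial piece of any segment in `⋃₀ F` lies in one member containing `x`. -/
theorem tan_sUnion {F : Finset (Set (E n))} (hF : ∀ A ∈ F, IsClosed A ∧ Convex ℝ A) (x : E n) :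
    Tan (⋃₀ (F : Set (Set (E n)))) x = ⋃ A ∈ F, Tan A x := by
  refine subset_antisymm ?_
    (Set.iUnion₂_subset fun A hA => tan_mono (Set.subset_sUnion_of_mem hA) x)
  rintro v ⟨l, hl, hseg⟩
  set K := ⋃ A ∈ F.filter (x ∉ ·), A
  have hK : Kᶜ ∈ 𝓝 x := by
    refine (isClosed_biUnion_finset fun A hA => (hF A (Finset.mem_filter.1 hA).1).1).isOpen_compl
      |>.mem_nhds ?_
    simp +contextual
  obtain ⟨t, htK, ht0, htl⟩ :=
    ((eventually_add_smul_mem hK v).and (Ioo_mem_nhdsGT hl)).exists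
  obtain ⟨A, hAF, hA⟩ := hseg (segment_add_smul_subset ht0.le htl.le (right_mem_segment ℝ _ _))
  have hxA : x ∈ A := by
    by_contra hxA
    exact htK (Set.mem_biUnion (Finset.mem_filter.2 ⟨hAF, hxA⟩) hA)
  exact Set.mem_biUnion hAF ((mem_tan_iff_of_convex (hF A hAF).2 hxA).2 ⟨t, ht0, hA⟩)

theorem tan_union_of_isClosed_of_convex (hAc : IsClosed A) (hAv : Convex ℝ A)
    (hBc : IsClosed B) (hBv : Convex ℝ B) (x : E n) :
    Tan (A ∪ B) x = Tan A x ∪ Tan B x := by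
  classical
  have := tan_sUnion (F := {A, B}) (by simp [*]) x
  simpa [Set.sUnion_pair] using this

theorem tan_setOf_inner_le {w : E n} {c : ℝ} (hx : ⟪w, x⟫ = c) :
    Tan {y | ⟪w, y⟫ ≤ c} x = {v | ⟪w, v⟫ ≤ 0} := by
  ext v
  have hconv : Convex ℝ {y : E n | ⟪w, y⟫ ≤ c} := convex_halfSpace_le (innerₛₗ ℝ w).isLinear c
  rw [mem_tan_iff_of_convex hconv hx.le]
  simp only [Set.mem_ofPred_eq, inner_add_right, real_inner_smul_right, hx, add_le_iff_nonpos_right]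
  exact ⟨fun ⟨l, hl, h⟩ => nonpos_of_mul_nonpos_right h hl,
    fun h => ⟨1, one_pos, by simpa using h⟩⟩

theorem isConeUnion_tan_setOf_inner_le (w : E n) (c : ℝ) (x : E n) :
    IsConeUnion (Tan {y | ⟪w, y⟫ ≤ c} x) := by
  rcases lt_trichotomy ⟪w, x⟫ c with hlt | heq | hgt
  · have hnhds : {y | ⟪w, y⟫ ≤ c} ∈ 𝓝 x :=
      mem_of_superset ((isOpen_lt (by fun_prop : Continuous fun y : E n => ⟪w, y⟫)
        continuous_const).mem_nhds hlt) (Set.ofPred_subset_ofPred.2 fun _ => le_of_lt)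
    rw [tan_eq_univ_of_mem_nhds hnhds]
    exact IsPolyhedralCone.isConeUnion ⟨∅, by simp⟩
  · rw [tan_setOf_inner_le heq]
    exact IsPolyhedralCone.isConeUnion ⟨{w}, by simp⟩
  · rw [tan_eq_empty_of_notMem (show x ∉ {y | ⟪w, y⟫ ≤ c} from not_le.2 hgt)]
    exact isConeUnion_empty

theorem isConeUnion_tan_setOf_le_inner (u : E n) (c : ℝ) (x : E n) :
    IsConeUnion (Tan {y | c ≤ ⟪u, y⟫} x) := by
  have hneg : {y : E n | c ≤ ⟪u, y⟫} = {y | ⟪-u, y⟫ ≤ -c} := by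
    ext
    simp [inner_neg_left]
  rw [hneg]
  exact isConeUnion_tan_setOf_inner_le (-u) (-c) x

theorem tan_convexHull {s : Finset (E n)} (hx : x ∈ convexHull ℝ (s : Set (E n))) :
    Tan (convexHull ℝ (s : Set (E n))) x = conicHull ℝ s (· - x) := by
  have hsub : ∀ f : E n → ℝ, ∑ y ∈ s, f y • (y - x) = ∑ y ∈ s, f y • y - (∑ y ∈ s, f y) • x := by
    simp [smul_sub, Finset.sum_sub_distrib, Finset.sum_smul]
  ext v
  rw [mem_tan_iff_of_convex (convex_convexHull ℝ _) hx]
  constructor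
  · rintro ⟨l, hl, hxv⟩
    obtain ⟨w, hw0, hw1, hwx⟩ := Finset.mem_convexHull'.1 hxv
    refine ⟨fun y => l⁻¹ * w y, fun y hy => mul_nonneg (inv_nonneg.2 hl.le) (hw0 y hy), ?_⟩
    simp only [mul_smul, ← Finset.smul_sum, hsub, hw1, hwx, one_smul, add_sub_cancel_left,
      inv_smul_smul₀ hl.ne']
  · rintro ⟨f, hf, rfl⟩
    set M := ∑ y ∈ s, f y
    rcases (Finset.sum_nonneg hf).eq_or_lt with hM | hM
    · refine ⟨1, one_pos, ?_⟩
      have hf0 := (Finset.sum_eq_zero_iff_of_nonneg hf).1 hM.symm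
      rwa [Finset.sum_eq_zero fun y hy => by rw [hf0 y hy, zero_smul], smul_zero, add_zero]
    · refine ⟨M⁻¹, inv_pos.2 hM, ?_⟩
      convert s.centerMass_mem_convexHull hf hM (fun y hy => hy) using 1
      rw [Finset.centerMass, hsub, smul_sub, smul_smul, inv_mul_cancel₀ hM.ne', one_smul,
        add_sub_cancel]

theorem IsPolytope.isClosed (hP : IsPolytope P) : IsClosed P := by
  obtain ⟨s, -, rfl⟩ := hP
  exact s.finite_toSet.isClosed_convexHull ℝ

theorem IsPolytope.convex (hP : IsPolytope P) : Convex ℝ P := by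
  obtain ⟨s, -, rfl⟩ := hP
  exact convex_convexHull ℝ _

theorem IsPolytope.isConeUnion_tan (hP : IsPolytope P) (x : E n) : IsConeUnion (Tan P x) := by
  by_cases hx : x ∈ P
  · obtain ⟨s, -, rfl⟩ := hP
    rw [tan_convexHull hx]
    exact isConeUnion_conicHull s _
  · rw [tan_eq_empty_of_notMem hx]
    exact isConeUnion_empty

theorem IsPolyhedron.isConeUnion_tan (hA : IsPolyhedron A) (x : E n) : IsConeUnion (Tan A x) := by
  obtain ⟨F, hF, rfl⟩ := hA
  rw [tan_sUnion (fun P hP => ⟨(hF P hP).isClosed, (hF P hP).convex⟩)]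
  exact IsConeUnion.biUnion fun P hP => (hF P hP).isConeUnion_tan x

theorem IsPolyhedron.tan_union (hA : IsPolyhedron A) (hB : IsPolyhedron B) (x : E n) :
    Tan (A ∪ B) x = Tan A x ∪ Tan B x := by
  classical
  obtain ⟨F, hF, rfl⟩ := hA
  obtain ⟨G, hG, rfl⟩ := hB
  have hcc : ∀ P ∈ F ∪ G, IsClosed P ∧ Convex ℝ P := fun P hP => by
    rcases Finset.mem_union.1 hP with hP | hP
    exacts [⟨(hF P hP).isClosed, (hF P hP).convex⟩, ⟨(hG P hP).isClosed, (hG P hP).convex⟩]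
  rw [← Set.sUnion_union, ← Finset.coe_union, tan_sUnion hcc,
    tan_sUnion fun P hP => hcc P (Finset.mem_union_left G hP),
    tan_sUnion fun P hP => hcc P (Finset.mem_union_right F hP), Finset.set_biUnion_union]

end TangentCones

section TangentValuation

def IsConeUnionValuation {n : ℕ} (φd : Set (E n) → ℝ) : Prop :=
  ∀ A B : Set (E n), IsConeUnion A → IsConeUnion B → φd (A ∪ B) + φd (A ∩ B) = φd A + φd B

variable {n : ℕ} {φd : Set (E n) → ℝ}

theorem map_tan_union_add_map_tan_inter (hφd : IsConeUnionValuation φd) {A B : Set (E n)}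
    {x : E n} (hA : IsConeUnion (Tan A x)) (hB : IsConeUnion (Tan B x))
    (hAB : Tan (A ∪ B) x = Tan A x ∪ Tan B x) :
    φd (Tan (A ∪ B) x) + φd (Tan (A ∩ B) x) = φd (Tan A x) + φd (Tan B x) := by
  rw [hAB, tan_inter]
  exact hφd _ _ hA hB

theorem IsPolyhedron.map_tan_union_add_map_tan_inter (hφd : IsConeUnionValuation φd)
    {A B : Set (E n)} (hA : IsPolyhedron A) (hB : IsPolyhedron B) (x : E n) :
    φd (Tan (A ∪ B) x) + φd (Tan (A ∩ B) x) = φd (Tan A x) + φd (Tan B x) :=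
  _root_.map_tan_union_add_map_tan_inter hφd (hA.isConeUnion_tan x) (hB.isConeUnion_tan x)
    (hA.tan_union hB x)

theorem IsPolytope.map_tan_eq_add_sub (hφd : IsConeUnionValuation φd) {P : Set (E n)}
    (hP : IsPolytope P) (u : E n) (c : ℝ) (x : E n) :
    φd (Tan P x) = φd (Tan (P ∩ {y | c ≤ ⟪u, y⟫}) x) + φd (Tan (P ∩ {y | ⟪u, y⟫ ≤ c}) x)
      - φd (Tan (P ∩ {y | ⟪u, y⟫ = c}) x) := by
  have hunion : P ∩ {y | c ≤ ⟪u, y⟫} ∪ P ∩ {y | ⟪u, y⟫ ≤ c} = P := by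
    rw [← Set.inter_union_distrib_left, Set.inter_eq_left]
    exact fun y _ => le_total c ⟪u, y⟫
  have hinter : P ∩ {y | c ≤ ⟪u, y⟫} ∩ (P ∩ {y | ⟪u, y⟫ ≤ c}) = P ∩ {y | ⟪u, y⟫ = c} := by
    ext y
    simp only [Set.mem_inter_iff, Set.mem_ofPred_eq, le_antisymm_iff (a := ⟪u, y⟫)]
    tauto
  have hge : Convex ℝ {y : E n | c ≤ ⟪u, y⟫} := convex_halfSpace_ge (innerₛₗ ℝ u).isLinear c
  have hle : Convex ℝ {y : E n | ⟪u, y⟫ ≤ c} := convex_halfSpace_le (innerₛₗ ℝ u).isLinear c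
  have key := map_tan_union_add_map_tan_inter hφd
    (tan_inter P _ x ▸ (hP.isConeUnion_tan x).inter (isConeUnion_tan_setOf_le_inner u c x))
    (tan_inter P _ x ▸ (hP.isConeUnion_tan x).inter (isConeUnion_tan_setOf_inner_le u c x))
    (tan_union_of_isClosed_of_convex
      (hP.isClosed.inter (isClosed_le continuous_const (by fun_prop)))
      (hP.convex.inter hge)
      (hP.isClosed.inter (isClosed_le (by fun_prop) continuous_const))
      (hP.convex.inter hle) x)
  rw [hunion, hinter] at key
  linarith

end TangentValuation

theorem stmt8_general {n : ℕ} (φd : Set (E n) → ℝ)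
    (hd0 : φd ∅ = 0)
    (hdval : ∀ A B : Set (E n), IsConeUnion A → IsConeUnion B →
      φd (A ∪ B) + φd (A ∩ B) = φd A + φd B)
    (κ : Set (E n) → E n → ℝ)
    (hκ : ∀ (P : Set (E n)) (x : E n), κ P x = if x ∈ P then φd (Tan P x) else 0) :
    (∀ x : E n, ∀ P : Set (E n), IsPolytope P → ∀ (u : E n) (c : ℝ), u ≠ 0 →
      (P ∩ {y | ⟪u, y⟫ = c}).Nonempty →
      κ P x = κ (P ∩ {y | c ≤ ⟪u, y⟫}) x + κ (P ∩ {y | ⟪u, y⟫ ≤ c}) x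
        - κ (P ∩ {y | ⟪u, y⟫ = c}) x) ∧
    (∀ x : E n, ∃ κ' : Set (E n) → ℝ,
      (∀ P : Set (E n), IsPolytope P → κ' P = κ P x) ∧ κ' ∅ = 0 ∧
      ∀ A B : Set (E n), IsPolyhedron A → IsPolyhedron B →
        κ' (A ∪ B) + κ' (A ∩ B) = κ' A + κ' B) := by
  have hκTan : ∀ P x, κ P x = φd (Tan P x) := fun P x => by
    by_cases hx : x ∈ P
    · rw [hκ, if_pos hx]
    · rw [hκ, if_neg hx, tan_eq_empty_of_notMem hx, hd0]
  simp only [hκTan]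
  exact ⟨fun x P hP u c _ _ => hP.map_tan_eq_add_sub hdval u c x,
    fun x => ⟨fun A => φd (Tan A x), fun _ _ => rfl,
      by simp only [tan_eq_empty_of_notMem (Set.notMem_empty x), hd0],
      fun A B hA hB => hA.map_tan_union_add_map_tan_inter hdval hB x⟩⟩

/-- For a simple normalized valuation `φ` on cones with additively extended dual
valuation `φd`, the function `κ(·,x) = φd(Tan(·,x))` (vanishing off `P`) is weakly
additive on convex polytopes, and hence extends to a valuation on polyhedra. -/
theorem stmt8 {n : ℕ} (φ φd : Set (E n) → ℝ)
    (hφ : IsConeValuation φ) (hsimple : IsSimple φ) (hnorm : φ (Set.univ : Set (E n)) = 1)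
    (hd0 : φd ∅ = 0)
    (hdval : ∀ A B : Set (E n), IsConeUnion A → IsConeUnion B →
      φd (A ∪ B) + φd (A ∩ B) = φd A + φd B)
    (hdext : ∀ C : Set (E n), IsPolyhedralCone C → φd C = φ (polarDual C))
    (κ : Set (E n) → E n → ℝ)
    (hκ : ∀ (P : Set (E n)) (x : E n), κ P x = if x ∈ P then φd (Tan P x) else 0) :
    (∀ x : E n, ∀ P : Set (E n), IsPolytope P → ∀ (u : E n) (c : ℝ), u ≠ 0 →
      (P ∩ {y | ⟪u, y⟫ = c}).Nonempty →
      κ P x = κ (P ∩ {y | c ≤ ⟪u, y⟫}) x + κ (P ∩ {y | ⟪u, y⟫ ≤ c}) x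
        - κ (P ∩ {y | ⟪u, y⟫ = c}) x) ∧
    (∀ x : E n, ∃ κ' : Set (E n) → ℝ,
      (∀ P : Set (E n), IsPolytope P → κ' P = κ P x) ∧ κ' ∅ = 0 ∧
      ∀ A B : Set (E n), IsPolyhedron A → IsPolyhedron B →
        κ' (A ∪ B) + κ' (A ∩ B) = κ' A + κ' B) :=
  stmt8_general φd hd0 hdval κ hκ
end
end
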